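/- arXiv:1901.06736 — 3 statements merged into one kernel-verified Lean document; each statement's English description precedes it below -/
import Mathlib

section
/- Let V be a real Banach space, K ⊆ V convex, u ∈ K, T : V → V* hemicontinuous, φ : V → ℝ ∪ {+∞} convex and finite on K, m ∈ V*. If for every w ∈ K and every λ ∈ (0,1), writing u_λ = λw + (1−λ)u, one has ⟨T(u_λ), w−u⟩ + φ(w) − φ(u) ≥ ⟨m, w−u⟩, then ⟨T(u), w−u⟩ + φ(w) − φ(u) ≥ ⟨m, w−u⟩ for all w ∈ K. -/
/-!
Along the segment `t ↦ u + t • (w - u)` the assumed inequality holds for every `t ∈ (0, 1)`.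
Once `φ u` and `φ w` are known to be real, it is an inequality between real numbers whose right
side is continuous in `t` by hemicontinuity of `T`, so it survives the limit `t → 0⁺`.
-/

open NormedSpace

theorem EReal.coe_le_coe_add_sub_iff {x y : ℝ} {p q : EReal} (hp : p ≠ ⊥) (hp' : p ≠ ⊤)
    (hq : q ≠ ⊥) (hq' : q ≠ ⊤) :
    (x : EReal) ≤ y + p - q ↔ x ≤ y + p.toReal - q.toReal := by
  lift p to ℝ using ⟨hp', hp⟩
  lift q to ℝ using ⟨hq', hq⟩
  rw [← EReal.coe_add, ← EReal.coe_sub, EReal.coe_le_coe_iff, EReal.toReal_coe,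
    EReal.toReal_coe]

theorem ContinuousOn.le_apply_left_of_forall_Ioo {f : ℝ → ℝ} {a b c : ℝ} (hab : a < b)
    (hf : ContinuousOn f (Set.Icc a b)) (h : ∀ t ∈ Set.Ioo a b, c ≤ f t) : c ≤ f a :=
  continuousWithinAt_const.closure_le (by simp [closure_Ioo hab.ne, hab.le])
    ((hf a (Set.left_mem_Icc.2 hab.le)).mono Set.Ioo_subset_Icc_self) h

theorem minty_hard_direction_limit_general
    {V : Type*} [NormedAddCommGroup V] [NormedSpace ℝ V]
    (K : Set V) (u : V) (hu : u ∈ K)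
    (T : V → StrongDual ℝ V)
    (hhemi : ∀ x z w : V, ContinuousOn (fun t : ℝ => T (x + t • z) w) (Set.Icc 0 1))
    (φ : V → EReal) (hnotbot : ∀ x, φ x ≠ ⊥)
    (hfin : ∀ x ∈ K, φ x ≠ ⊤)
    (m : StrongDual ℝ V)
    (h : ∀ w ∈ K, ∀ lam : ℝ, 0 < lam → lam < 1 →
      (m (w - u) : EReal) ≤
        (T (lam • w + (1 - lam) • u) (w - u) : EReal) + φ w - φ u) :
    ∀ w ∈ K, (m (w - u) : EReal) ≤ (T u (w - u) : EReal) + φ w - φ u := by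
  intro w hw
  have hreal := fun y : ℝ => EReal.coe_le_coe_add_sub_iff (x := m (w - u)) (y := y)
    (hnotbot w) (hfin w hw) (hnotbot u) (hfin u hu)
  have hsegment (t : ℝ) : t • w + (1 - t) • u = u + t • (w - u) := by
    rw [smul_sub, sub_smul, one_smul]; abel
  have hinterior : ∀ t ∈ Set.Ioo (0 : ℝ) 1,
      m (w - u) + (φ u).toReal - (φ w).toReal ≤ T (u + t • (w - u)) (w - u) := by
    intro t ht
    have := (hreal _).1 (h w hw t ht.1 ht.2)
    rw [hsegment] at this
    linarith
  have hlimit := (hhemi u (w - u) (w - u)).le_apply_left_of_forall_Ioo zero_lt_one hinterior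
  rw [hreal]
  simp only [zero_smul, add_zero] at hlimit
  linarith

/-- If for every `w ∈ K` and every `λ ∈ (0,1)`, with `u_λ = λ • w + (1-λ) • u`, one has
`⟨T u_λ, w - u⟩ + φ w - φ u ≥ ⟨m, w - u⟩`, then (by hemicontinuity of `T`)
`⟨T u, w - u⟩ + φ w - φ u ≥ ⟨m, w - u⟩` for all `w ∈ K`. -/
theorem minty_hard_direction_limit
    {V : Type*} [NormedAddCommGroup V] [NormedSpace ℝ V] [CompleteSpace V]
    (K : Set V) (hKconv : Convex ℝ K) (u : V) (hu : u ∈ K)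
    (T : V → StrongDual ℝ V)
    (hhemi : ∀ x z w : V, ContinuousOn (fun t : ℝ => T (x + t • z) w) (Set.Icc 0 1))
    (φ : V → EReal) (hnotbot : ∀ x, φ x ≠ ⊥)
    (hconv : ∀ x y : V, ∀ s t : ℝ, 0 ≤ s → 0 ≤ t → s + t = 1 →
      φ (s • x + t • y) ≤ (s : EReal) * φ x + (t : EReal) * φ y)
    (hfin : ∀ x ∈ K, φ x ≠ ⊤)
    (m : StrongDual ℝ V)
    (h : ∀ w ∈ K, ∀ lam : ℝ, 0 < lam → lam < 1 →
      (m (w - u) : EReal) ≤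
        (T (lam • w + (1 - lam) • u) (w - u) : EReal) + φ w - φ u) :
    ∀ w ∈ K, (m (w - u) : EReal) ≤ (T u (w - u) : EReal) + φ w - φ u :=
  minty_hard_direction_limit_general K u hu T hhemi φ hnotbot hfin m h
end

section
/- Under the hypotheses of the existence theorem (V reflexive, C bounded closed convex, K Mosco continuous with nonempty closed convex values, T monotone continuous, φ proper convex lsc and continuous on C, m ∈ V*), the solution set Γ = {u ∈ C : u ∈ K(u) and ⟨T(u), v−u⟩ + φ(v) − φ(u) ≥ ⟨m, v−u⟩ for all v ∈ K(u)} is sequentially weakly closed: if uₙ ∈ Γ and uₙ ⇀ u, then u ∈ Γ. -/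
open NormedSpace Filter Topology

/-!
Monotonicity of `T` turns the inequality at each `uₙ` into its Minty form
`⟨m, v - uₙ⟩ ≤ ⟨T v, v - uₙ⟩ + φ v - φ uₙ`. Tested along a strongly convergent recovery sequence
`vₙ ∈ K uₙ` from (M₁), the right side converges (a strongly convergent functional paired with a
bounded weakly convergent sequence), while `φ`, convex with closed sublevel sets in `C`, is weakly
sequentially lower semicontinuous; so the Minty form holds at the weak limit `u`, and `u ∈ K u` by (M₂).
Minty's lemma recovers the original inequality: test at `u + t (v - u)`, divide by `t` using
convexity of `φ`, and let `t → 0⁺` using continuity of `T`.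
-/

section WeakConvergence

variable {V : Type*} [NormedAddCommGroup V] [NormedSpace ℝ V]

def WeakTendsto (x : ℕ → V) (xl : V) : Prop :=
  ∀ f : StrongDual ℝ V, Tendsto (fun n => f (x n)) atTop (𝓝 (f xl))

theorem Filter.Tendsto.weakTendsto {x : ℕ → V} {xl : V} (hx : Tendsto x atTop (𝓝 xl)) :
    WeakTendsto x xl :=
  fun f => (f.continuous.tendsto xl).comp hx

theorem WeakTendsto.sub {x y : ℕ → V} {xl yl : V} (hx : WeakTendsto x xl)
    (hy : WeakTendsto y yl) : WeakTendsto (x - y) (xl - yl) := fun f => by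
  simpa only [Pi.sub_apply, map_sub] using (hx f).sub (hy f)

theorem WeakTendsto.mem_of_convex_of_isClosed {x : ℕ → V} {xl : V} {s : Set V}
    (hx : WeakTendsto x xl) (hs : Convex ℝ s) (hsc : IsClosed s) (hxs : ∀ᶠ n in atTop, x n ∈ s) :
    xl ∈ s := by
  by_contra hxl
  obtain ⟨f, c, hfs, hfxl⟩ := geometric_hahn_banach_closed_point hs hsc hxl
  have : f xl ≤ c := le_of_tendsto (hx f) (hxs.mono fun n hn => (hfs _ hn).le)
  linarith

theorem WeakTendsto.tendsto_apply {x : ℕ → V} {xl : V} {F : ℕ → StrongDual ℝ V}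
    {f : StrongDual ℝ V} (hx : WeakTendsto x xl) (hbdd : Bornology.IsBounded (Set.range x))
    (hF : Tendsto F atTop (𝓝 f)) : Tendsto (fun n => F n (x n)) atTop (𝓝 (f xl)) := by
  obtain ⟨M, hM⟩ := isBounded_iff_forall_norm_le.1 hbdd
  have herr : Tendsto (fun n => (F n - f) (x n)) atTop (𝓝 0) := by
    refine squeeze_zero_norm (a := fun n => ‖F n - f‖ * M)
      (fun n => ((F n - f).le_opNorm (x n)).trans ?_) ?_
    · exact mul_le_mul_of_nonneg_left (hM _ ⟨n, rfl⟩) (norm_nonneg _)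
    · simpa using (tendsto_sub_nhds_zero_iff.2 hF).norm.mul_const M
  simpa using herr.add (hx f)

variable {ψ : V → ℝ} {C : Set V}

theorem WeakTendsto.le_of_eventually_le {x : ℕ → V} {xl : V} {c : ℝ} (hx : WeakTendsto x xl)
    (hψ : ConvexOn ℝ C ψ) (hψc : ContinuousOn ψ C) (hC : IsClosed C)
    (hxc : ∀ᶠ n in atTop, x n ∈ C ∧ ψ (x n) ≤ c) : ψ xl ≤ c :=
  (hx.mem_of_convex_of_isClosed (hψ.convex_le c)
    (hψc.preimage_isClosed_of_isClosed hC isClosed_Iic) hxc).2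

theorem WeakTendsto.le_of_le_tendsto {x : ℕ → V} {xl : V} {r : ℕ → ℝ} {L : ℝ}
    (hx : WeakTendsto x xl) (hψ : ConvexOn ℝ C ψ) (hψc : ContinuousOn ψ C) (hC : IsClosed C)
    (hxC : ∀ n, x n ∈ C) (hxr : ∀ n, ψ (x n) ≤ r n) (hr : Tendsto r atTop (𝓝 L)) :
    ψ xl ≤ L :=
  le_of_forall_gt_imp_ge_of_dense fun _ hc => hx.le_of_eventually_le hψ hψc hC <|
    (hr.eventually_le_const hc).mono fun n hn => ⟨hxC n, (hxr n).trans hn⟩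

end WeakConvergence

section Minty

variable {V : Type*} [NormedAddCommGroup V] [NormedSpace ℝ V]
  {T : V → StrongDual ℝ V} {m : StrongDual ℝ V} {ψ : V → ℝ}

theorem minty_of_variational_of_monotone (hmono : ∀ x y : V, 0 ≤ (T x - T y) (x - y))
    {u v : V} (h : m (v - u) ≤ T u (v - u) + ψ v - ψ u) :
    m (v - u) ≤ T v (v - u) + ψ v - ψ u := by
  have := hmono v u
  simp only [sub_apply] at this
  linarith

theorem variational_of_minty {s : Set V} {u : V} (hψ : ConvexOn ℝ s ψ) (hT : ContinuousAt T u)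
    (hu : u ∈ s) (hminty : ∀ w ∈ s, m (w - u) ≤ T w (w - u) + ψ w - ψ u) :
    ∀ v ∈ s, m (v - u) ≤ T u (v - u) + ψ v - ψ u := by
  intro v hv
  have hseg : ∀ t ∈ Set.Ioc (0 : ℝ) 1,
      m (v - u) ≤ T (u + t • (v - u)) (v - u) + ψ v - ψ u := by
    rintro t ⟨ht0, ht1⟩
    set w := u + t • (v - u)
    have hψw : ψ w ≤ (1 - t) * ψ u + t * ψ v := by
      have hw : (1 - t) • u + t • v = w := by module
      simpa only [hw, smul_eq_mul] using hψ.2 hu hv (sub_nonneg.2 ht1) ht0.le (by ring)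
    have hw := hminty w (hψ.1.add_smul_sub_mem hu hv ⟨ht0.le, ht1⟩)
    rw [show w - u = t • (v - u) from add_sub_cancel_left _ _, map_smul, map_smul,
      smul_eq_mul, smul_eq_mul] at hw
    have : t * m (v - u) ≤ t * (T w (v - u) + ψ v - ψ u) := by nlinarith
    exact le_of_mul_le_mul_left this ht0
  have hpath : Tendsto (fun t : ℝ => u + t • (v - u)) (𝓝[>] 0) (𝓝 u) := by
    have : Continuous fun t : ℝ => u + t • (v - u) := by fun_prop
    simpa using (this.tendsto 0).mono_left nhdsWithin_le_nhds
  have hlim : Tendsto (fun t : ℝ => T (u + t • (v - u)) (v - u) + ψ v - ψ u) (𝓝[>] 0)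
      (𝓝 (T u (v - u) + ψ v - ψ u)) :=
    ((((ContinuousLinearMap.apply ℝ ℝ (v - u)).continuous.tendsto _).comp
      (hT.tendsto.comp hpath)).add_const _).sub_const _
  exact ge_of_tendsto hlim (eventually_of_mem (Ioc_mem_nhdsGT one_pos) hseg)

end Minty

section LimitSolution

variable {V : Type*} [NormedAddCommGroup V] [NormedSpace ℝ V]
  {T : V → StrongDual ℝ V} {m : StrongDual ℝ V} {ψ : V → ℝ} {C : Set V} {K : V → Set V}

theorem minty_of_weakTendsto_solutions (hC : IsClosed C) (hCbdd : Bornology.IsBounded C)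
    (hKC : ∀ x ∈ C, K x ⊆ C) (hmono : ∀ x y : V, 0 ≤ (T x - T y) (x - y))
    (hT : Continuous T) (hψ : ConvexOn ℝ C ψ) (hψc : ContinuousOn ψ C)
    {u : ℕ → V} {ul : V} (huC : ∀ n, u n ∈ C)
    (hu : ∀ n, ∀ v ∈ K (u n), m (v - u n) ≤ T (u n) (v - u n) + ψ v - ψ (u n))
    (hul : WeakTendsto u ul) (hulC : ul ∈ C)
    (hK : ∀ y ∈ K ul, ∃ ys : ℕ → V, (∀ n, ys n ∈ K (u n)) ∧ Tendsto ys atTop (𝓝 y)) :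
    ∀ v ∈ K ul, m (v - ul) ≤ T v (v - ul) + ψ v - ψ ul := by
  intro v hv
  obtain ⟨ys, hysK, hys⟩ := hK v hv
  have hysC : ∀ n, ys n ∈ C := fun n => hKC _ (huC n) (hysK n)
  have hminty : ∀ n, ψ (u n) ≤ T (ys n) (ys n - u n) + ψ (ys n) - m (ys n - u n) := fun n => by
    linarith [minty_of_variational_of_monotone hmono (hu n _ (hysK n))]
  have hdiff : WeakTendsto (ys - u) (v - ul) := hys.weakTendsto.sub hul
  have hbdd : Bornology.IsBounded (Set.range (ys - u)) := (hCbdd.sub hCbdd).subset <|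
    Set.range_subset_iff.2 fun n => Set.sub_mem_sub (hysC n) (huC n)
  have hψys : Tendsto (fun n => ψ (ys n)) atTop (𝓝 (ψ v)) :=
    (hψc v (hKC _ hulC hv)).tendsto.comp (tendsto_nhdsWithin_iff.2 ⟨hys, .of_forall hysC⟩)
  have hlim : Tendsto (fun n => T (ys n) (ys n - u n) + ψ (ys n) - m (ys n - u n)) atTop
      (𝓝 (T v (v - ul) + ψ v - m (v - ul))) :=
    ((hdiff.tendsto_apply hbdd ((hT.tendsto v).comp hys)).add hψys).sub (hdiff m)
  linarith [hul.le_of_le_tendsto hψ hψc hC huC hminty hlim]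

end LimitSolution

theorem convexOn_of_coe_eqOn {E : Type*} [AddCommGroup E] [Module ℝ E] {C : Set E}
    {φ : E → EReal} {ψ : E → ℝ} (hC : Convex ℝ C) (hφψ : ∀ x ∈ C, φ x = ψ x)
    (hconv : ∀ x y : E, ∀ s t : ℝ, 0 ≤ s → 0 ≤ t → s + t = 1 →
      φ (s • x + t • y) ≤ (s : EReal) * φ x + (t : EReal) * φ y) :
    ConvexOn ℝ C ψ := by
  refine ⟨hC, fun x hx y hy s t hs ht hst => ?_⟩
  have := hconv x y s t hs ht hst
  rw [hφψ _ (hC hx hy hs ht hst), hφψ x hx, hφψ y hy] at this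
  exact_mod_cast this

theorem continuousOn_of_coe_eqOn {X : Type*} [TopologicalSpace X] {C : Set X}
    {φ : X → EReal} {ψ : X → ℝ} (hφ : ContinuousOn φ C) (hφψ : ∀ x ∈ C, φ x = ψ x) :
    ContinuousOn ψ C :=
  EReal.isEmbedding_coe.isInducing.continuousOn_iff.2 <| hφ.congr fun x hx => (hφψ x hx).symm

theorem solution_set_sequentially_weakly_closed_general
    {V : Type*} [NormedAddCommGroup V] [NormedSpace ℝ V]
    (C : Set V) (hCclosed : IsClosed C) (hCconv : Convex ℝ C)
    (hCbdd : Bornology.IsBounded C)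
    (K : V → Set V)
    (hK : ∀ u ∈ C, (K u).Nonempty ∧ IsClosed (K u) ∧ Convex ℝ (K u) ∧ K u ⊆ C)
    (hM1 : ∀ (x : ℕ → V) (xl : V), (∀ n, x n ∈ C) →
      (∀ f : StrongDual ℝ V, Tendsto (fun n => f (x n)) atTop (𝓝 (f xl))) → xl ∈ C →
      ∀ y ∈ K xl, ∃ ys : ℕ → V, (∀ n, ys n ∈ K (x n)) ∧ Tendsto ys atTop (𝓝 y))
    (hM2 : ∀ (x : ℕ → V) (xl : V) (y : ℕ → V) (yl : V), (∀ n, x n ∈ C) →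
      (∀ f : StrongDual ℝ V, Tendsto (fun n => f (x n)) atTop (𝓝 (f xl))) →
      (∀ n, y n ∈ K (x n)) →
      (∀ f : StrongDual ℝ V, Tendsto (fun n => f (y n)) atTop (𝓝 (f yl))) →
      yl ∈ K xl)
    (T : V → StrongDual ℝ V)
    (hmono : ∀ x y : V, 0 ≤ (T x - T y) (x - y))
    (hTcont : Continuous T)
    (φ : V → EReal)
    (hnotbot : ∀ x, φ x ≠ ⊥)
    (hconv : ∀ x y : V, ∀ s t : ℝ, 0 ≤ s → 0 ≤ t → s + t = 1 →
      φ (s • x + t • y) ≤ (s : EReal) * φ x + (t : EReal) * φ y)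
    (hφcont : ContinuousOn φ C)
    (hdom : C ⊆ interior {x | φ x ≠ ⊤})
    (m : StrongDual ℝ V)
    (u : ℕ → V) (ul : V)
    (hu : ∀ n, u n ∈ C ∧ u n ∈ K (u n) ∧ ∀ v ∈ K (u n),
      (m (v - u n) : EReal) ≤ (T (u n) (v - u n) : EReal) + φ v - φ (u n))
    (huconv : ∀ f : StrongDual ℝ V, Tendsto (fun n => f (u n)) atTop (𝓝 (f ul))) :
    ul ∈ C ∧ ul ∈ K ul ∧ ∀ v ∈ K ul,
      (m (v - ul) : EReal) ≤ (T ul (v - ul) : EReal) + φ v - φ ul := by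
  have hKC : ∀ x ∈ C, K x ⊆ C := fun x hx => (hK x hx).2.2.2
  set ψ : V → ℝ := fun x => (φ x).toReal
  have hφψ : ∀ x ∈ C, φ x = ψ x := fun x hx =>
    (EReal.coe_toReal (interior_subset (hdom hx)) (hnotbot x)).symm
  have hψ : ConvexOn ℝ C ψ := convexOn_of_coe_eqOn hCconv hφψ hconv
  have hψc : ContinuousOn ψ C := continuousOn_of_coe_eqOn hφcont hφψ
  have huC : ∀ n, u n ∈ C := fun n => (hu n).1
  have hulC : ul ∈ C := WeakTendsto.mem_of_convex_of_isClosed huconv hCconv hCclosed (.of_forall huC)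
  have hulK : ul ∈ K ul := hM2 u ul u ul huC huconv (fun n => (hu n).2.1) huconv
  have huψ : ∀ n, ∀ v ∈ K (u n), m (v - u n) ≤ T (u n) (v - u n) + ψ v - ψ (u n) := by
    intro n v hv
    have := (hu n).2.2 v hv
    rw [hφψ v (hKC _ (huC n) hv), hφψ _ (huC n)] at this
    exact_mod_cast this
  have hminty := minty_of_weakTendsto_solutions hCclosed hCbdd hKC hmono hTcont hψ hψc
    huC huψ huconv hulC (hM1 u ul huC huconv hulC)
  have hvar := variational_of_minty (hψ.subset (hKC ul hulC) (hK ul hulC).2.2.1)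
    hTcont.continuousAt hulK hminty
  refine ⟨hulC, hulK, fun v hv => ?_⟩
  rw [hφψ v (hKC ul hulC hv), hφψ ul hulC]
  exact_mod_cast hvar v hv

/-- Under the hypotheses of the existence theorem, the solution set
`Γ = {u ∈ C : u ∈ K u ∧ ⟨T u, v - u⟩ + φ v - φ u ≥ ⟨m, v - u⟩ ∀ v ∈ K u}`
is sequentially weakly closed. -/
theorem solution_set_sequentially_weakly_closed
    {V : Type*} [NormedAddCommGroup V] [NormedSpace ℝ V] [CompleteSpace V]
    (hrefl : Function.Surjective (inclusionInDoubleDual ℝ V))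
    (C : Set V) (hCne : C.Nonempty) (hCclosed : IsClosed C) (hCconv : Convex ℝ C)
    (hCbdd : Bornology.IsBounded C)
    (K : V → Set V)
    (hK : ∀ u ∈ C, (K u).Nonempty ∧ IsClosed (K u) ∧ Convex ℝ (K u) ∧ K u ⊆ C)
    (hM1 : ∀ (x : ℕ → V) (xl : V), (∀ n, x n ∈ C) →
      (∀ f : StrongDual ℝ V, Tendsto (fun n => f (x n)) atTop (𝓝 (f xl))) → xl ∈ C →
      ∀ y ∈ K xl, ∃ ys : ℕ → V, (∀ n, ys n ∈ K (x n)) ∧ Tendsto ys atTop (𝓝 y))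
    (hM2 : ∀ (x : ℕ → V) (xl : V) (y : ℕ → V) (yl : V), (∀ n, x n ∈ C) →
      (∀ f : StrongDual ℝ V, Tendsto (fun n => f (x n)) atTop (𝓝 (f xl))) →
      (∀ n, y n ∈ K (x n)) →
      (∀ f : StrongDual ℝ V, Tendsto (fun n => f (y n)) atTop (𝓝 (f yl))) →
      yl ∈ K xl)
    (T : V → StrongDual ℝ V)
    (hmono : ∀ x y : V, 0 ≤ (T x - T y) (x - y))
    (hTcont : Continuous T)
    (φ : V → EReal)
    (hproper : ∃ x, φ x ≠ ⊤) (hnotbot : ∀ x, φ x ≠ ⊥)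
    (hconv : ∀ x y : V, ∀ s t : ℝ, 0 ≤ s → 0 ≤ t → s + t = 1 →
      φ (s • x + t • y) ≤ (s : EReal) * φ x + (t : EReal) * φ y)
    (hlsc : LowerSemicontinuous φ)
    (hφcont : ContinuousOn φ C)
    (hdom : C ⊆ interior {x | φ x ≠ ⊤})
    (m : StrongDual ℝ V)
    (u : ℕ → V) (ul : V)
    (hu : ∀ n, u n ∈ C ∧ u n ∈ K (u n) ∧ ∀ v ∈ K (u n),
      (m (v - u n) : EReal) ≤ (T (u n) (v - u n) : EReal) + φ v - φ (u n))
    (huconv : ∀ f : StrongDual ℝ V, Tendsto (fun n => f (u n)) atTop (𝓝 (f ul))) :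
    ul ∈ C ∧ ul ∈ K ul ∧ ∀ v ∈ K ul,
      (m (v - ul) : EReal) ≤ (T ul (v - ul) : EReal) + φ v - φ ul :=
  solution_set_sequentially_weakly_closed_general C hCclosed hCconv hCbdd K hK hM1 hM2 T hmono
    hTcont φ hnotbot hconv hφcont hdom m u ul hu huconv
end

section
/- Let V be a reflexive Banach space, K ⊆ V nonempty closed convex with K ∩ C₀ ≠ ∅ for some bounded set C₀, T : V → V* monotone and hemicontinuous, φ : V → ℝ ∪ {+∞} proper convex lsc, and m ∈ V*. Then the set S = {u ∈ K : ⟨T(u), v−u⟩ + φ(v) − φ(u) ≥ ⟨m, v−u⟩ for all v ∈ K} is convex and closed. -/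
/-!
By monotonicity of `T` and Minty's trick (test the inequality at `u + t • (v - u)`, use convexity
of `φ`, divide by `t` and let `t → 0⁺` by hemicontinuity), `u ∈ K` with `φ u < ⊤` solves the
variational inequality iff `φ u ≤ φ v + ⟪T v - m, v - u⟫` for all `v ∈ K`. For fixed `v` the right
side is affine in `u`, and `φ` is convex and lower semicontinuous, so the solution set is an
intersection of closed convex sets.
-/

open Set Filter Topology

namespace EReal

/-- Since `⊤ - ⊤ = ⊥` in `EReal`, the left side rules out `x = ⊤`. -/
lemma coe_le_add_sub_iff {a b : ℝ} {x y : EReal} (hx : x ≠ ⊥) :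
    (a : EReal) ≤ b + y - x ↔ x ≠ ⊤ ∧ x ≤ y + ↑(b - a) := by
  induction x with
  | bot => exact absurd rfl hx
  | top => simp
  | coe x =>
    rw [le_sub_iff_add_le (.inl (coe_ne_bot x)) (.inl (coe_ne_top x))]
    induction y with
    | bot => simp
    | top => rw [coe_add_top, top_add_coe]; simp
    | coe y =>
      norm_cast
      constructor
      · intro h; exact ⟨coe_ne_top x, by linarith⟩
      · rintro ⟨-, h⟩; linarith

end EReal

lemma LowerSemicontinuous.isClosed_setOf_le_add_coe {X : Type*} [TopologicalSpace X]
    {f : X → EReal} (hf : LowerSemicontinuous f) (c : EReal) {g : X → ℝ} (hg : Continuous g) :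
    IsClosed {x | f x ≤ c + g x} := by
  have hsub : LowerSemicontinuous fun x => f x + ((-g x : ℝ) : EReal) :=
    hf.add' (continuous_coe_real_ereal.comp hg.neg).lowerSemicontinuous fun x =>
      EReal.continuousAt_add (.inr (EReal.coe_ne_bot _)) (.inr (EReal.coe_ne_top _))
  convert hsub.isClosed_preimage c using 1
  ext x
  change f x ≤ c + g x ↔ f x + ((-g x : ℝ) : EReal) ≤ c
  rw [EReal.coe_neg, ← sub_eq_add_neg,
    EReal.sub_le_iff_le_add (.inl (EReal.coe_ne_bot _)) (.inl (EReal.coe_ne_top _))]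

section Convexity

variable {V : Type*} [AddCommGroup V] [Module ℝ V]

def ERealConvex (φ : V → EReal) : Prop :=
  ∀ x y : V, ∀ s t : ℝ, 0 ≤ s → 0 ≤ t → s + t = 1 →
    φ (s • x + t • y) ≤ (s : EReal) * φ x + (t : EReal) * φ y

variable {φ : V → EReal}

lemma ERealConvex.apply_le (hφ : ERealConvex φ) {x y : V} {r s a b : ℝ} (hx : φ x ≤ r)
    (hy : φ y ≤ s) (ha : 0 ≤ a) (hb : 0 ≤ b) (hab : a + b = 1) :
    φ (a • x + b • y) ≤ ↑(a * r + b * s) :=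
  calc φ (a • x + b • y) ≤ a * φ x + b * φ y := hφ x y a b ha hb hab
    _ ≤ a * r + b * s := by gcongr
    _ = ↑(a * r + b * s) := by norm_cast

lemma ERealConvex.convex_setOf_le_add_apply_sub (hφ : ERealConvex φ) (ℓ : V →ₗ[ℝ] ℝ) {v : V}
    (hv : φ v ≠ ⊥) : Convex ℝ {u | φ u ≤ φ v + ↑(ℓ (v - u))} := by
  by_cases htop : φ v = ⊤
  · simp only [htop, EReal.top_add_coe, le_top, ofPred_true]
    exact convex_univ
  lift φ v to ℝ using ⟨htop, hv⟩ with s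
  intro u₁ h₁ u₂ h₂ a b ha hb hab
  simp only [mem_ofPred_eq, ← EReal.coe_add] at h₁ h₂ ⊢
  convert hφ.apply_le h₁ h₂ ha hb hab using 2
  simp only [map_sub, map_add, map_smul, smul_eq_mul]
  linear_combination (s + ℓ v) * hab.symm

end Convexity

section Minty

variable {V : Type*} [AddCommGroup V] [Module ℝ V] [TopologicalSpace V]
  {K : Set V} {A : V → StrongDual ℝ V} {φ : V → EReal}

def mixedVISolutionSet (K : Set V) (A : V → StrongDual ℝ V) (φ : V → EReal) : Set V :=
  {u | u ∈ K ∧ φ u ≠ ⊤ ∧ ∀ v ∈ K, φ u ≤ φ v + ↑(A u (v - u))}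

def mintySolutionSet (K : Set V) (A : V → StrongDual ℝ V) (φ : V → EReal) : Set V :=
  {u | u ∈ K ∧ φ u ≠ ⊤ ∧ ∀ v ∈ K, φ u ≤ φ v + ↑(A v (v - u))}

lemma le_add_apply_sub_of_minty (hK : Convex ℝ K) (hφ : ERealConvex φ) {u v : V} (hu : u ∈ K)
    (hv : v ∈ K) (hφu : φ u ≠ ⊤) (hφu' : φ u ≠ ⊥)
    (hA : ContinuousOn (fun t : ℝ => A (u + t • (v - u)) (v - u)) (Icc 0 1))
    (hminty : ∀ w ∈ K, φ u ≤ φ w + ↑(A w (w - u))) :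
    φ u ≤ φ v + ↑(A u (v - u)) := by
  by_cases hφv : φ v = ⊤
  · rw [hφv, EReal.top_add_coe]
    exact le_top
  have hφv' : φ v ≠ ⊥ := fun h => hφu' <| by simpa [h] using hminty v hv
  obtain ⟨r, hr⟩ : ∃ r : ℝ, φ u = r := ⟨_, (EReal.coe_toReal hφu hφu').symm⟩
  obtain ⟨s, hs⟩ : ∃ s : ℝ, φ v = s := ⟨_, (EReal.coe_toReal hφv hφv').symm⟩
  have hsegment : ∀ t ∈ Ioc (0 : ℝ) 1, r - s ≤ A (u + t • (v - u)) (v - u) := by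
    rintro t ⟨ht₀, ht₁⟩
    set w := u + t • (v - u)
    have hw : w = (1 - t) • u + t • v := by module
    have hwK : w ∈ K := hw ▸ hK hu hv (by linarith) ht₀.le (by ring)
    have hφw : φ w ≤ ↑((1 - t) * r + t * s) :=
      hw ▸ hφ.apply_le hr.le hs.le (by linarith) ht₀.le (by ring)
    have hAw : A w (w - u) = t * A w (v - u) := by simp [w]
    have hrw : (r : EReal) ≤ ↑((1 - t) * r + t * s + t * A w (v - u)) := by
      calc (r : EReal) = φ u := hr.symm
        _ ≤ φ w + ↑(A w (w - u)) := hminty w hwK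
        _ ≤ ↑((1 - t) * r + t * s) + ↑(t * A w (v - u)) := by rw [hAw]; gcongr
        _ = _ := by norm_cast
    have htr : t * (r - s) ≤ t * A w (v - u) := by
      linarith [EReal.coe_le_coe_iff.1 hrw]
    exact le_of_mul_le_mul_left htr ht₀
  have hlim : r - s ≤ A u (v - u) := by
    have hcont := ((hA 0 ⟨le_rfl, zero_le_one⟩).mono_of_mem_nhdsWithin
      (Icc_mem_nhdsGT zero_lt_one)).tendsto
    simp only [zero_smul, add_zero] at hcont
    exact ge_of_tendsto hcont (eventually_of_mem (Ioc_mem_nhdsGT zero_lt_one) hsegment)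
  rw [hr, hs, ← EReal.coe_add]
  exact EReal.coe_le_coe_iff.2 (by linarith)

lemma mixedVISolutionSet_eq_mintySolutionSet (hK : Convex ℝ K) (hφ : ERealConvex φ)
    (hφbot : ∀ x, φ x ≠ ⊥) (hmono : ∀ x y, 0 ≤ (A x - A y) (x - y))
    (hhemi : ∀ x z w, ContinuousOn (fun t : ℝ => A (x + t • z) w) (Icc 0 1)) :
    mixedVISolutionSet K A φ = mintySolutionSet K A φ := by
  ext u
  refine and_congr_right fun hu => and_congr_right fun hφu => ⟨fun h v hv => ?_, fun h v hv => ?_⟩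
  · have hAuv : A u (v - u) ≤ A v (v - u) := by
      simpa only [sub_apply, sub_nonneg] using hmono v u
    exact (h v hv).trans (by gcongr)
  · exact le_add_apply_sub_of_minty hK hφ hu hv hφu (hφbot u) (hhemi u (v - u) (v - u)) h

lemma mintySolutionSet_eq_empty_or_eq_biInter :
    mintySolutionSet K A φ = ∅ ∨
      mintySolutionSet K A φ = K ∩ ⋂ v ∈ K, {u | φ u ≤ φ v + ↑(A v (v - u))} := by
  by_cases hdom : ∃ v₀ ∈ K, φ v₀ ≠ ⊤
  · obtain ⟨v₀, hv₀, hφv₀⟩ := hdom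
    refine .inr <| ext fun u => ?_
    simp only [mintySolutionSet, mem_inter_iff, mem_iInter₂, mem_ofPred_eq]
    exact and_congr_right fun hu => ⟨fun h => h.2, fun h =>
      ⟨ne_top_of_le_ne_top (EReal.add_ne_top hφv₀ (EReal.coe_ne_top _)) (h v₀ hv₀), h⟩⟩
  · push Not at hdom
    exact .inl <| eq_empty_of_forall_notMem fun u hu => hu.2.1 (hdom u hu.1)

lemma convex_mintySolutionSet (hK : Convex ℝ K) (hφ : ERealConvex φ) (hφbot : ∀ x, φ x ≠ ⊥) :
    Convex ℝ (mintySolutionSet K A φ) := by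
  rcases mintySolutionSet_eq_empty_or_eq_biInter (K := K) (A := A) (φ := φ) with h | h <;> rw [h]
  · exact convex_empty
  · exact hK.inter <| convex_iInter₂ fun v _ =>
      hφ.convex_setOf_le_add_apply_sub (A v : V →ₗ[ℝ] ℝ) (hφbot v)

lemma isClosed_mintySolutionSet (hK : IsClosed K) (hφ : LowerSemicontinuous φ) :
    IsClosed (mintySolutionSet K A φ) := by
  rcases mintySolutionSet_eq_empty_or_eq_biInter (K := K) (A := A) (φ := φ) with h | h <;> rw [h]
  · exact isClosed_empty
  · refine hK.inter <| isClosed_biInter fun v _ => ?_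
    simp only [map_sub]
    exact hφ.isClosed_setOf_le_add_coe _ (continuous_const.sub (A v).continuous)

end Minty

open NormedSpace

theorem vi_solution_set_convex_closed_general
    {V : Type*} [NormedAddCommGroup V] [NormedSpace ℝ V]
    (K : Set V) (hKclosed : IsClosed K) (hKconv : Convex ℝ K)
    (T : V → StrongDual ℝ V)
    (hmono : ∀ x y : V, 0 ≤ (T x - T y) (x - y))
    (hhemi : ∀ x z w : V, ContinuousOn (fun t : ℝ => T (x + t • z) w) (Set.Icc 0 1))
    (φ : V → EReal)
    (hnotbot : ∀ x, φ x ≠ ⊥)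
    (hconv : ∀ x y : V, ∀ s t : ℝ, 0 ≤ s → 0 ≤ t → s + t = 1 →
      φ (s • x + t • y) ≤ (s : EReal) * φ x + (t : EReal) * φ y)
    (hlsc : LowerSemicontinuous φ)
    (m : StrongDual ℝ V) :
    Convex ℝ {u | u ∈ K ∧ ∀ v ∈ K,
        (m (v - u) : EReal) ≤ (T u (v - u) : EReal) + φ v - φ u} ∧
    IsClosed {u | u ∈ K ∧ ∀ v ∈ K,
        (m (v - u) : EReal) ≤ (T u (v - u) : EReal) + φ v - φ u} := by
  set A : V → StrongDual ℝ V := fun w => T w - m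
  have hS : {u | u ∈ K ∧ ∀ v ∈ K, (m (v - u) : EReal) ≤ (T u (v - u) : EReal) + φ v - φ u} =
      mixedVISolutionSet K A φ := by
    ext u
    simp only [mixedVISolutionSet, mem_ofPred_eq, EReal.coe_le_add_sub_iff (hnotbot u)]
    exact and_congr_right fun hu => ⟨fun h => ⟨(h u hu).1, fun v hv => (h v hv).2⟩,
      fun h v hv => ⟨h.1, h.2 v hv⟩⟩
  have hAmono : ∀ x y, 0 ≤ (A x - A y) (x - y) := by simpa [A] using hmono
  have hAhemi : ∀ x z w, ContinuousOn (fun t : ℝ => A (x + t • z) w) (Icc 0 1) :=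
    fun x z w => (hhemi x z w).sub continuousOn_const
  rw [hS, mixedVISolutionSet_eq_mintySolutionSet hKconv hconv hnotbot hAmono hAhemi]
  exact ⟨convex_mintySolutionSet hKconv hconv hnotbot, isClosed_mintySolutionSet hKclosed hlsc⟩

/-- The solution set of the mixed variational inequality on a fixed nonempty closed convex
set `K` (meeting a bounded set `C₀`), with `T` monotone hemicontinuous and `φ` proper convex
l.s.c., is convex and closed. -/
theorem vi_solution_set_convex_closed
    {V : Type*} [NormedAddCommGroup V] [NormedSpace ℝ V] [CompleteSpace V]
    (hrefl : Function.Surjective (inclusionInDoubleDual ℝ V))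
    (K : Set V) (hKne : K.Nonempty) (hKclosed : IsClosed K) (hKconv : Convex ℝ K)
    (C₀ : Set V) (hC₀bdd : Bornology.IsBounded C₀) (hKC₀ : (K ∩ C₀).Nonempty)
    (T : V → StrongDual ℝ V)
    (hmono : ∀ x y : V, 0 ≤ (T x - T y) (x - y))
    (hhemi : ∀ x z w : V, ContinuousOn (fun t : ℝ => T (x + t • z) w) (Set.Icc 0 1))
    (φ : V → EReal)
    (hproper : ∃ x, φ x ≠ ⊤) (hnotbot : ∀ x, φ x ≠ ⊥)
    (hconv : ∀ x y : V, ∀ s t : ℝ, 0 ≤ s → 0 ≤ t → s + t = 1 →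
      φ (s • x + t • y) ≤ (s : EReal) * φ x + (t : EReal) * φ y)
    (hlsc : LowerSemicontinuous φ)
    (m : StrongDual ℝ V) :
    Convex ℝ {u | u ∈ K ∧ ∀ v ∈ K,
        (m (v - u) : EReal) ≤ (T u (v - u) : EReal) + φ v - φ u} ∧
    IsClosed {u | u ∈ K ∧ ∀ v ∈ K,
        (m (v - u) : EReal) ≤ (T u (v - u) : EReal) + φ v - φ u} :=
  vi_solution_set_convex_closed_general K hKclosed hKconv T hmono hhemi φ hnotbot hconv hlsc m
end
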